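/- arXiv:0901.3198 — 2 statements merged into one kernel-verified Lean document; each statement's English description precedes it below -/
import Mathlib

section
/- Let Σ be a finite alphabet with background probabilities b_i > 0 summing to 1 and foreground probabilities f_{ij} ≥ 0 on pairs. For a set R of pairs define f(R) = Σ_{(i,j)∈R} f_{ij} and b(R) = Σ_{(i,j)∈R} b_i b_j. For a threshold t > 0 let R(t) = {(i,j) | f_{ij} > t · b_i b_j}. Then R(t) is not strictly dominated by any other set of pairs: there is no set α with f(α) ≥ f(R(t)), b(α) ≤ b(R(t)), and (f(α) > f(R(t)) or b(α) < b(R(t))). -/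
/-
The Lagrangian `f(α) - t·b(α)` of a letter is the sum of the terms `f_{ij} - t·b_i b_j` over its pairs,
and `R(t)` collects exactly the positive terms, so `R(t)` maximises the Lagrangian. Since `t > 0`, a letter
strictly dominating `R(t)` would have a strictly larger Lagrangian.
-/

open Finset

/-- Foreground probability of a set of amino-acid pairs. -/
noncomputable def Fprob {S : Type*} (f : S × S → ℝ) (R : Finset (S × S)) : ℝ :=
  ∑ p ∈ R, f p

/-- Background probability of a set of amino-acid pairs. -/
noncomputable def Bprob {S : Type*} (b : S → ℝ) (R : Finset (S × S)) : ℝ :=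
  ∑ p ∈ R, b p.1 * b p.2

/-- The threshold set `R(t)` of pairs with likelihood ratio exceeding `t`. -/
noncomputable def Rset {S : Type*} [Fintype S] (b : S → ℝ) (f : S × S → ℝ) (t : ℝ) :
    Finset (S × S) :=
  Finset.univ.filter fun p => t * (b p.1 * b p.2) < f p

lemma Finset.sum_le_sum_filter_pos {ι M : Type*} [Fintype ι] [AddCommGroup M] [LinearOrder M]
    [IsOrderedAddMonoid M] (g : ι → M) (s : Finset ι) :
    ∑ i ∈ s, g i ≤ ∑ i ∈ univ.filter (fun i => 0 < g i), g i := by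
  rw [← sum_filter_add_sum_filter_not s (fun i => 0 < g i)]
  have hneg : ∑ i ∈ s.filter (fun i => ¬ 0 < g i), g i ≤ 0 :=
    sum_nonpos fun i hi => not_lt.1 (mem_filter.1 hi).2
  have hpos : ∑ i ∈ s.filter (fun i => 0 < g i), g i ≤
      ∑ i ∈ univ.filter (fun i => 0 < g i), g i :=
    sum_le_sum_of_subset_of_nonneg (filter_subset_filter _ (subset_univ s))
      fun i hi _ => (mem_filter.1 hi).2.le
  exact add_le_of_le_of_nonpos hpos hneg

section Letters

variable {S : Type*} (b : S → ℝ) (f : S × S → ℝ) (t : ℝ)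

lemma Fprob_sub_mul_Bprob (α : Finset (S × S)) :
    Fprob f α - t * Bprob b α = ∑ p ∈ α, (f p - t * (b p.1 * b p.2)) := by
  rw [Fprob, Bprob, mul_sum, sum_sub_distrib]

lemma Rset_eq_filter_pos [Fintype S] :
    Rset b f t = univ.filter fun p => 0 < f p - t * (b p.1 * b p.2) := by
  simp only [Rset, sub_pos]

lemma Fprob_sub_mul_Bprob_le_Rset [Fintype S] (α : Finset (S × S)) :
    Fprob f α - t * Bprob b α ≤ Fprob f (Rset b f t) - t * Bprob b (Rset b f t) := by
  rw [Fprob_sub_mul_Bprob, Fprob_sub_mul_Bprob, Rset_eq_filter_pos]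
  exact sum_le_sum_filter_pos _ α

end Letters

theorem stmt0_general {S : Type*} [Fintype S]
    (b : S → ℝ) (f : S × S → ℝ)
    (t : ℝ) (ht : 0 < t) :
    ¬ ∃ α : Finset (S × S),
        Fprob f (Rset b f t) ≤ Fprob f α ∧
        Bprob b α ≤ Bprob b (Rset b f t) ∧
        (Fprob f (Rset b f t) < Fprob f α ∨ Bprob b α < Bprob b (Rset b f t)) := by
  rintro ⟨α, hF, hB, hstrict⟩
  have hmax := Fprob_sub_mul_Bprob_le_Rset b f t α
  rcases hstrict with hF' | hB'
  · linarith [mul_le_mul_of_nonneg_left hB ht.le]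
  · linarith [mul_lt_mul_of_pos_left hB' ht]

/-- `R(t)` is not strictly dominated by any other letter. -/
theorem stmt0 {S : Type*} [Fintype S] [DecidableEq S]
    (b : S → ℝ) (f : S × S → ℝ)
    (hb : ∀ i, 0 < b i) (hbsum : ∑ i, b i = 1)
    (hf : ∀ p, 0 ≤ f p)
    (t : ℝ) (ht : 0 < t) :
    ¬ ∃ α : Finset (S × S),
        Fprob f (Rset b f t) ≤ Fprob f α ∧
        Bprob b α ≤ Bprob b (Rset b f t) ∧
        (Fprob f (Rset b f t) < Fprob f α ∨ Bprob b α < Bprob b (Rset b f t)) :=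
  stmt0_general b f t ht
end

section
/- With the same setting, if α is any set of pairs satisfying f(α) = f(R(t)) and b(α) = b(R(t)), and additionally every pair in α \ R(t) has strict likelihood ratio f_{ij}/(b_i b_j) < t (strictly below threshold), then α = R(t). -/
open Finset

/-! The excess `f - t·b` is positive exactly on `R(t)`. Equal foreground and background masses make
its sums over `α` and `R(t)` agree, hence also its sums over `α \ R(t)` and `R(t) \ α`. The first is
negative unless `α \ R(t)` is empty and the second positive unless `R(t) \ α` is empty, so both
differences are empty. -/

namespace Finset

variable {ι M : Type*} [DecidableEq ι] [AddCancelCommMonoid M] [PartialOrder M]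
  [IsOrderedCancelAddMonoid M]

lemma eq_of_sum_eq_of_neg_of_pos {s t : Finset ι} {g : ι → M}
    (h : ∑ i ∈ s, g i = ∑ i ∈ t, g i) (hs : ∀ i ∈ s \ t, g i < 0)
    (ht : ∀ i ∈ t \ s, 0 < g i) : s = t := by
  have hsdiff : ∑ i ∈ s \ t, g i = ∑ i ∈ t \ s, g i := sum_sdiff_eq_sum_sdiff_iff.2 h
  refine Subset.antisymm ?_ ?_ <;> rw [← sdiff_eq_empty_iff_subset] <;> by_contra hne
  · have hneg : ∑ i ∈ s \ t, g i < 0 := sum_neg hs (nonempty_iff_ne_empty.2 hne)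
    exact (hneg.trans_le (sum_nonneg fun i hi ↦ (ht i hi).le)).ne hsdiff
  · have hpos : 0 < ∑ i ∈ t \ s, g i := sum_pos ht (nonempty_iff_ne_empty.2 hne)
    exact ((sum_nonpos fun i hi ↦ (hs i hi).le).trans_lt hpos).ne hsdiff

end Finset

lemma mem_Rset {S : Type*} [Fintype S] {b : S → ℝ} {f : S × S → ℝ} {t : ℝ} {p : S × S} :
    p ∈ Rset b f t ↔ t * (b p.1 * b p.2) < f p := by
  simp [Rset]

lemma sum_sub_threshold_eq {S : Type*} (b : S → ℝ) (f : S × S → ℝ) (t : ℝ) (R : Finset (S × S)) :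
    ∑ p ∈ R, (f p - t * (b p.1 * b p.2)) = Fprob f R - t * Bprob b R := by
  rw [sum_sub_distrib, ← mul_sum, Fprob, Bprob]

theorem stmt2_general {S : Type*} [Fintype S] [DecidableEq S]
    (b : S → ℝ) (f : S × S → ℝ)
    (t : ℝ)
    (α : Finset (S × S))
    (hF : Fprob f α = Fprob f (Rset b f t))
    (hB : Bprob b α = Bprob b (Rset b f t))
    (hstrict : ∀ p ∈ α \ Rset b f t, f p < t * (b p.1 * b p.2)) :
    α = Rset b f t := by
  refine eq_of_sum_eq_of_neg_of_pos (g := fun p ↦ f p - t * (b p.1 * b p.2)) ?_ ?_ ?_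
  · rw [sum_sub_threshold_eq, sum_sub_threshold_eq, hF, hB]
  · exact fun p hp ↦ sub_neg.2 (hstrict p hp)
  · exact fun p hp ↦ sub_pos.2 (mem_Rset.1 (mem_sdiff.1 hp).1)

/-- If `α` has the same foreground and background probabilities as `R(t)` and every pair of
`α \ R(t)` is strictly below the threshold, then `α = R(t)`. -/
theorem stmt2 {S : Type*} [Fintype S] [DecidableEq S]
    (b : S → ℝ) (f : S × S → ℝ)
    (hb : ∀ i, 0 < b i) (hf : ∀ p, 0 ≤ f p)
    (t : ℝ) (ht : 0 < t)
    (α : Finset (S × S))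
    (hF : Fprob f α = Fprob f (Rset b f t))
    (hB : Bprob b α = Bprob b (Rset b f t))
    (hstrict : ∀ p ∈ α \ Rset b f t, f p < t * (b p.1 * b p.2)) :
    α = Rset b f t :=
  stmt2_general b f t α hF hB hstrict
end
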